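/- Let k be odd and f = Σ_{1≤i,j≤k} x_i y_j z_{[j-i]_k} w_{[i+j]_k}. Then f is a balanced neighborly polynomial of type (k,k,k,k): for every S ⊆ {1,2,3,4} with |S| ≤ 2, H(f,S) = k^{|S|}. -/

import Mathlib

open MvPolynomial

/-- `diffMon m f` is the result of applying the differential operator `∂^m` to `f`. -/
noncomputable def diffMon {K σ : Type*} [CommSemiring K] (m : σ →₀ ℕ)
    (f : MvPolynomial σ K) : MvPolynomial σ K :=
  ∑ m' ∈ f.support,
    ((∏ i ∈ m.support, ((m' i).descFactorial (m i) : K)) * coeff m' f) •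
      monomial (m' - m) (1 : K)

/-- `applyTo f g = g(∂₁,…,∂ₙ) f`, linear in `g`. -/
noncomputable def applyTo {K σ : Type*} [CommSemiring K] (f : MvPolynomial σ K) :
    MvPolynomial σ K →ₗ[K] MvPolynomial σ K :=
  Finsupp.lsum K (fun m => LinearMap.toSpanSingleton K (MvPolynomial σ K) (diffMon m f)) ∘ₗ
    (AddMonoidAlgebra.coeffLinearEquiv K).toLinearMap

/-- The multidegree of an exponent vector `m` with respect to the coloring `c`. -/
def mdeg {σ : Type*} {d : ℕ} (c : σ → Fin d) (m : σ →₀ ℕ) (i : Fin d) : ℕ :=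
  m.sum fun x k => if c x = i then k else 0

/-- The `ℤ^d`-graded component of the polynomial ring of multidegree `v`,
with respect to the coloring `c` of the variables. -/
noncomputable def componentSub (K : Type*) [CommSemiring K] {σ : Type*} {d : ℕ}
    (c : σ → Fin d) (v : Fin d → ℕ) : Submodule K (MvPolynomial σ K) :=
  Submodule.span K {p | ∃ m : σ →₀ ℕ, (∀ i, mdeg c m i = v i) ∧ p = monomial m (1 : K)}

/-- `Hdim f S` is `H(f,S)`, the dimension of `{g(∂)f : g ∈ R_{e_S}}`. -/
noncomputable def Hdim {K : Type*} [Field K] {σ : Type*} {d : ℕ} (c : σ → Fin d)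
    (f : MvPolynomial σ K) (S : Finset (Fin d)) : ℕ :=
  Module.finrank K ((componentSub K c (fun i => if i ∈ S then 1 else 0)).map (applyTo f))

/-!
Index the variables as `x (a, t)` with colour `a : Fin 4` and `t : ZMod k`. Then
`f = ∑_p x^(E p)` with `x^(E p) = ∏_a x (a, v p a)`, where the rows
`v (i, j) = (i, j, j - i, i + j)` form an orthogonal array of strength two: any two columns determine the row, since `2` is a unit
modulo the odd `k`. The monomials of degree `e_S` are the transversals `x_φ = ∏_{a ∈ S} x (a, φ a)`,
and `∂_φ f` is the sum of `x^(E p) / x_φ` over the rows `p` extending `φ`; such rows exist because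
`|S| ≤ 2`. Since `x^(E p) / x_φ` still contains the two columns outside `S`, it determines `p` and
then `φ`, so the coefficients at `x^(E p_φ) / x_φ` form a dual family to the `k ^ |S|` derivatives
`∂_φ f`.
-/

section DifferentialOperators

variable {K σ : Type*}

lemma applyTo_monomial_one [CommSemiring K] (f : MvPolynomial σ K) (m : σ →₀ ℕ) :
    applyTo f (monomial m 1) = diffMon m f := by
  rw [← single_eq_monomial, applyTo]
  exact (sum_monomial_eq (u := m) (r := (1 : K))
    (b := fun m r => LinearMap.toSpanSingleton K (MvPolynomial σ K) (diffMon m f) r)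
    (map_zero _)).trans (one_smul K _)

lemma diffMon_add [CommSemiring K] (m : σ →₀ ℕ) (f g : MvPolynomial σ K) :
    diffMon m (f + g) = diffMon m f + diffMon m g := by
  have h : ∀ p : MvPolynomial σ K, diffMon m p = (AddMonoidAlgebra.coeff p).sum fun m' r =>
      ((∏ i ∈ m.support, ((m' i).descFactorial (m i) : K)) * r) • monomial (m' - m) (1 : K) :=
    fun _ => by rw [sum_def, diffMon]
  rw [h, h, h, AddMonoidAlgebra.coeff_add]
  exact Finsupp.sum_add_index' (fun _ => by simp) fun _ _ _ => by rw [mul_add, add_smul]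

lemma diffMon_sum [CommSemiring K] {ι : Type*} (m : σ →₀ ℕ) (s : Finset ι)
    (F : ι → MvPolynomial σ K) : diffMon m (∑ i ∈ s, F i) = ∑ i ∈ s, diffMon m (F i) :=
  map_sum ({ toFun := diffMon m, map_zero' := Finset.sum_empty, map_add' := diffMon_add m } :
    MvPolynomial σ K →+ MvPolynomial σ K) F s

lemma diffMon_monomial [CommSemiring K] (m n : σ →₀ ℕ) (a : K) :
    diffMon m (monomial n a) =
      ((∏ i ∈ m.support, ((n i).descFactorial (m i) : K)) * a) • monomial (n - m) 1 := by
  classical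
  rcases eq_or_ne a 0 with rfl | ha
  · simp [diffMon]
  · rw [diffMon, support_monomial, if_neg ha, Finset.sum_singleton, coeff_monomial, if_pos rfl]

lemma diffMon_monomial_one_of_le_one [CommSemiring K] {m n : σ →₀ ℕ} (hm : ∀ i, m i ≤ 1)
    (hn : ∀ i, n i ≤ 1) :
    diffMon m (monomial n (1 : K)) = if m ≤ n then monomial (n - m) 1 else 0 := by
  have hm1 : ∀ i ∈ m.support, m i = 1 := fun i hi =>
    le_antisymm (hm i) (Nat.one_le_iff_ne_zero.mpr (Finsupp.mem_support_iff.mp hi))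
  rw [diffMon_monomial, mul_one,
    Finset.prod_congr rfl fun i hi => by rw [hm1 i hi, Nat.descFactorial_one]]
  split_ifs with hmn
  · rw [Finset.prod_eq_one fun i hi => ?_, one_smul]
    have := hmn i
    rw [hm1 i hi] at this
    rw [le_antisymm (hn i) this, Nat.cast_one]
  · obtain ⟨i, hi⟩ := not_forall.mp fun h => hmn (Finsupp.le_def.mpr h)
    have hi' : i ∈ m.support := Finsupp.mem_support_iff.mpr (by omega)
    have hni : n i = 0 := by have := hm1 i hi'; omega
    rw [Finset.prod_eq_zero hi' (by rw [hni, Nat.cast_zero]), zero_smul]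

variable [Field K]

lemma map_applyTo_componentSub {d : ℕ} (c : σ → Fin d) (v : Fin d → ℕ)
    (f : MvPolynomial σ K) :
    (componentSub K c v).map (applyTo f) =
      Submodule.span K ((fun m => diffMon m f) '' {m | ∀ i, mdeg c m i = v i}) := by
  rw [componentSub, Submodule.map_span]
  congr 1
  ext p
  simp only [Set.mem_image, Set.mem_ofPred_eq]
  constructor
  · rintro ⟨_, ⟨m, hm, rfl⟩, rfl⟩
    exact ⟨m, hm, (applyTo_monomial_one f m).symm⟩
  · rintro ⟨m, hm, rfl⟩
    exact ⟨_, ⟨m, hm, rfl⟩, applyTo_monomial_one f m⟩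

lemma finrank_map_applyTo_componentSub {d : ℕ} (c : σ → Fin d) (v : Fin d → ℕ)
    (f : MvPolynomial σ K) {ι : Type*} [Fintype ι] (g : ι → σ →₀ ℕ)
    (hg : Set.range g = {m | ∀ i, mdeg c m i = v i})
    (hind : LinearIndependent K fun t => diffMon (g t) f) :
    Module.finrank K ((componentSub K c v).map (applyTo f)) = Fintype.card ι := by
  rw [map_applyTo_componentSub, ← hg, ← Set.range_comp]
  exact finrank_span_eq_card hind

end DifferentialOperators

section Transversal

variable {d : ℕ} {ι : Type*}

lemma mdeg_fst [Fintype ι] (m : Fin d × ι →₀ ℕ) (a : Fin d) :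
    mdeg Prod.fst m a = ∑ t, m (a, t) := by
  rw [mdeg, Finsupp.sum_fintype _ _ fun _ => by simp, Fintype.sum_prod_type,
    Finset.sum_eq_single a (fun b _ hb => by simp [hb]) (by simp)]
  simp

lemma exists_eq_ite_of_sum_eq_one [Fintype ι] [DecidableEq ι] {g : ι → ℕ} (h : ∑ t, g t = 1) :
    ∃ t, ∀ s, g s = if t = s then 1 else 0 := by
  obtain ⟨t, ht⟩ := (Finsupp.sum_eq_one_iff (Finsupp.equivFunOnFinite.symm g)).mp <| by
    rwa [Finsupp.sum_fintype _ _ fun _ => rfl]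
  exact ⟨t, fun s => by rw [← Finsupp.single_apply, ← ht]; rfl⟩

noncomputable def transversal (S : Finset (Fin d)) (φ : S → ι) : Fin d × ι →₀ ℕ :=
  ∑ a : S, Finsupp.single (a.1, φ a) 1

variable {S : Finset (Fin d)} [DecidableEq ι]

lemma transversal_apply (φ : S → ι) (a : Fin d) (t : ι) :
    transversal S φ (a, t) = if h : a ∈ S then if φ ⟨a, h⟩ = t then 1 else 0 else 0 := by
  rw [transversal, Finsupp.finsetSum_apply]
  by_cases ha : a ∈ S
  · rw [dif_pos ha, Finset.sum_eq_single ⟨a, ha⟩ (fun b _ hb => ?_) (by simp)]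
    · simp [Finsupp.single_apply]
    · rw [Finsupp.single_apply, if_neg]
      exact fun h => hb (Subtype.ext (congrArg Prod.fst h))
  · rw [dif_neg ha]
    exact Finset.sum_eq_zero fun b _ => Finsupp.single_eq_of_ne fun h =>
      ha (by rw [show a = b from congrArg Prod.fst h]; exact b.2)

lemma transversal_le_one (φ : S → ι) (x : Fin d × ι) : transversal S φ x ≤ 1 := by
  rw [transversal_apply]
  split_ifs <;> omega

variable [Fintype ι]

lemma mdeg_fst_transversal (φ : S → ι) (a : Fin d) :
    mdeg Prod.fst (transversal S φ) a = if a ∈ S then 1 else 0 := by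
  rw [mdeg_fst]
  simp only [transversal_apply]
  split_ifs <;> simp

lemma range_transversal :
    Set.range (transversal (ι := ι) S) =
      {m | ∀ a, mdeg Prod.fst m a = if a ∈ S then 1 else 0} := by
  ext m
  constructor
  · rintro ⟨φ, rfl⟩
    exact mdeg_fst_transversal φ
  · intro hm
    have hrow : ∀ a : S, ∃ t, ∀ s, m (a.1, s) = if t = s then 1 else 0 := fun a =>
      exists_eq_ite_of_sum_eq_one (by rw [← mdeg_fst m, hm, if_pos a.2])
    choose φ hφ using hrow
    refine ⟨φ, Finsupp.ext fun ⟨a, t⟩ => ?_⟩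
    rw [transversal_apply]
    by_cases ha : a ∈ S
    · rw [dif_pos ha, hφ ⟨a, ha⟩ t]
    · rw [dif_neg ha]
      have := hm a
      rw [mdeg_fst, if_neg ha, Finset.sum_eq_zero_iff] at this
      exact (this t (Finset.mem_univ t)).symm

lemma Hdim_fst_eq_card_pow {K : Type*} [Field K] (f : MvPolynomial (Fin d × ι) K)
    (hind : LinearIndependent K fun φ : S → ι => diffMon (transversal S φ) f) :
    Hdim Prod.fst f S = Fintype.card ι ^ S.card := by
  rw [Hdim, finrank_map_applyTo_componentSub _ _ f _ range_transversal hind, Fintype.card_fun,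
    Fintype.card_coe]

end Transversal

section OrthogonalArray

variable {d : ℕ} {ι P : Type*} {S : Finset (Fin d)}

def IsOrthogonalArray (v : P → Fin d → ι) : Prop :=
  Pairwise fun a b => Function.Bijective fun p => (v p a, v p b)

lemma IsOrthogonalArray.exists_row_eq [Nonempty ι] {v : P → Fin d → ι}
    (hv : IsOrthogonalArray v) (hd : 2 ≤ d) (hS : S.card ≤ 2) (φ : S → ι) :
    ∃ p, ∀ a : S, φ a = v p a := by
  obtain ⟨T, hST, -, hT⟩ := Finset.exists_subsuperset_card_eq (Finset.subset_univ S) hS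
    (by simpa using hd)
  obtain ⟨a, b, hab, rfl⟩ := Finset.card_eq_two.mp hT
  let ext : Fin d → ι := fun c => if h : c ∈ S then φ ⟨c, h⟩ else Classical.arbitrary ι
  obtain ⟨p, hp⟩ := (hv hab).surjective (ext a, ext b)
  refine ⟨p, fun c => ?_⟩
  have hc : φ c = ext c := by simp [ext]
  rcases Finset.mem_insert.mp (hST c.2) with h | h
  · rw [hc, h]
    exact (congrArg Prod.fst hp).symm
  · rw [hc, Finset.mem_singleton.mp h]
    exact (congrArg Prod.snd hp).symm

lemma IsOrthogonalArray.eq_of_eqOn_compl {v : P → Fin d → ι} (hv : IsOrthogonalArray v)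
    (hS : 2 ≤ Sᶜ.card) {p p' : P} (h : ∀ c ∉ S, v p c = v p' c) : p = p' := by
  obtain ⟨a, ha, b, hb, hab⟩ := Finset.one_lt_card.mp hS
  exact (hv hab).injective (Prod.ext (h a (Finset.mem_compl.mp ha))
    (h b (Finset.mem_compl.mp hb)))

noncomputable def arrayPolynomial (K : Type*) [CommSemiring K] [Fintype P]
    (v : P → Fin d → ι) : MvPolynomial (Fin d × ι) K :=
  ∑ p, ∏ a, X (a, v p a)

lemma prod_X_eq_monomial_transversal {K : Type*} [CommSemiring K] (x : Fin d → ι) :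
    ∏ a, (X (a, x a) : MvPolynomial (Fin d × ι) K) =
      monomial (transversal Finset.univ fun a => x a) 1 := by
  rw [transversal, Finset.sum_coe_sort Finset.univ fun a => Finsupp.single (a, x a) 1,
    monomial_sum_one]
  rfl

variable [DecidableEq ι]

lemma transversal_univ_apply (x : Fin d → ι) (a : Fin d) (t : ι) :
    transversal Finset.univ (fun a => x a) (a, t) = if x a = t then 1 else 0 := by
  rw [transversal_apply, dif_pos (Finset.mem_univ a)]

lemma transversal_le_transversal_univ_iff {φ : S → ι} {x : Fin d → ι} :
    transversal S φ ≤ transversal Finset.univ (fun a => x a) ↔ ∀ a : S, φ a = x a := by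
  constructor
  · intro h a
    have := h (a.1, φ a)
    rw [transversal_apply, dif_pos a.2, if_pos rfl, transversal_univ_apply] at this
    by_contra hne
    rw [if_neg (Ne.symm hne)] at this
    omega
  · intro h ⟨b, t⟩
    rw [transversal_apply, transversal_univ_apply]
    by_cases hb : b ∈ S
    · rw [dif_pos hb, h ⟨b, hb⟩]
    · rw [dif_neg hb]
      exact Nat.zero_le _

lemma IsOrthogonalArray.eq_of_tsub_eq {v : P → Fin d → ι} (hv : IsOrthogonalArray v)
    (hS : 2 ≤ Sᶜ.card) {φ ψ : S → ι} {p p' : P} (hφ : ∀ a : S, φ a = v p a)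
    (hψ : ∀ a : S, ψ a = v p' a)
    (h : (transversal Finset.univ fun a => v p a) - transversal S φ =
      (transversal Finset.univ fun a => v p' a) - transversal S ψ) :
    p = p' ∧ φ = ψ := by
  have hp : p = p' := hv.eq_of_eqOn_compl hS fun c hc => by
    have := congrArg (· (c, v p c)) h
    rw [Finsupp.tsub_apply, Finsupp.tsub_apply, transversal_univ_apply, transversal_univ_apply,
      transversal_apply, transversal_apply, dif_neg hc, dif_neg hc, if_pos rfl] at this
    by_contra hne
    rw [if_neg (Ne.symm hne)] at this
    omega
  subst hp
  exact ⟨rfl, funext fun a => (hφ a).trans (hψ a).symm⟩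

variable [Fintype P]

lemma diffMon_transversal_arrayPolynomial {K : Type*} [CommSemiring K] (v : P → Fin d → ι)
    (φ : S → ι) :
    diffMon (transversal S φ) (arrayPolynomial K v) =
      ∑ p with ∀ a : S, φ a = v p a,
        monomial ((transversal Finset.univ fun a => v p a) - transversal S φ) 1 := by
  simp only [arrayPolynomial, prod_X_eq_monomial_transversal, diffMon_sum,
    diffMon_monomial_one_of_le_one (transversal_le_one _) (transversal_le_one _),
    transversal_le_transversal_univ_iff, Finset.sum_ite, Finset.sum_const_zero, add_zero]

theorem IsOrthogonalArray.linearIndependent_diffMon_transversal {K : Type*} [Field K]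
    [Nonempty ι] {v : P → Fin d → ι} (hv : IsOrthogonalArray v) (hS : S.card ≤ 2)
    (hd : S.card + 2 ≤ d) :
    LinearIndependent K fun φ : S → ι => diffMon (transversal S φ) (arrayPolynomial K v) := by
  have hSc : 2 ≤ Sᶜ.card := by
    rw [Finset.card_compl, Fintype.card_fin]
    omega
  choose row hrow using hv.exists_row_eq (by omega) hS
  let μ : (S → ι) → Fin d × ι →₀ ℕ := fun φ =>
    (transversal Finset.univ fun a => v (row φ) a) - transversal S φ
  have hcoeff : ∀ φ ψ, coeff (μ φ) (diffMon (transversal S ψ) (arrayPolynomial K v)) =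
      if φ = ψ then 1 else 0 := by
    intro φ ψ
    rw [diffMon_transversal_arrayPolynomial, coeff_sum]
    simp only [coeff_monomial]
    split_ifs with hφψ
    · subst hφψ
      rw [Finset.sum_eq_single_of_mem (row φ) (by simpa using hrow φ) fun p hp hne =>
        if_neg fun h => hne (hv.eq_of_tsub_eq hSc (Finset.mem_filter.mp hp).2 (hrow φ) h).1,
        if_pos rfl]
    · exact Finset.sum_eq_zero fun p hp => if_neg fun h =>
        hφψ (hv.eq_of_tsub_eq hSc (Finset.mem_filter.mp hp).2 (hrow φ) h).2.symm
  exact LinearIndependent.of_pairwise_dual_eq_zero_one _ (fun φ => lcoeff K (μ φ))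
    (fun φ ψ hne => (hcoeff φ ψ).trans (if_neg hne)) fun φ => (hcoeff φ φ).trans (if_pos rfl)

theorem IsOrthogonalArray.Hdim_arrayPolynomial {K : Type*} [Field K] [Fintype ι] [Nonempty ι]
    {v : P → Fin d → ι} (hv : IsOrthogonalArray v) (hS : S.card ≤ 2) (hd : S.card + 2 ≤ d) :
    Hdim Prod.fst (arrayPolynomial K v) S = Fintype.card ι ^ S.card :=
  Hdim_fst_eq_card_pow _ (hv.linearIndependent_diffMon_transversal hS hd)

end OrthogonalArray

def sumDiffArray (k : ℕ) (ij : ZMod k × ZMod k) : Fin 4 → ZMod k :=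
  ![ij.1, ij.2, ij.2 - ij.1, ij.1 + ij.2]

lemma isOrthogonalArray_sumDiffArray {k : ℕ} [NeZero k] (hk : Odd k) :
    IsOrthogonalArray (sumDiffArray k) := by
  obtain ⟨u, hu⟩ : ∃ u : ZMod k, 2 * u = 1 := by
    have := (ZMod.isUnit_iff_coprime 2 k).mpr (Nat.coprime_two_left.mpr hk)
    simpa using this.exists_right_inv
  intro a b hab
  rw [← Finite.injective_iff_bijective]
  rintro ⟨i, j⟩ ⟨i', j'⟩ h
  obtain ⟨h₁, h₂⟩ := Prod.ext_iff.mp h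
  rw [Prod.ext_iff]
  fin_cases a <;> fin_cases b <;> simp [sumDiffArray] at hab h₁ h₂ ⊢
  all_goals first
    | grind
    -- the columns `j - i` and `i + j`: halve their sum and their difference
    | exact ⟨by linear_combination (i' - i) * hu + u * (h₂ - h₁),
        by linear_combination (j' - j) * hu + u * (h₂ + h₁)⟩
    | exact ⟨by linear_combination (i' - i) * hu + u * (h₁ - h₂),
        by linear_combination (j' - j) * hu + u * (h₁ + h₂)⟩

lemma arrayPolynomial_sumDiffArray (K : Type*) [CommSemiring K] (k : ℕ) [NeZero k] :
    arrayPolynomial K (sumDiffArray k) =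
      ∑ i : ZMod k, ∑ j : ZMod k,
        (X ((0 : Fin 4), i) * X ((1 : Fin 4), j) * X ((2 : Fin 4), j - i) * X ((3 : Fin 4), i + j) :
          MvPolynomial (Fin 4 × ZMod k) K) := by
  simp [arrayPolynomial, Fintype.sum_prod_type, Fin.prod_univ_four, sumDiffArray]

/-- For odd `k`, `f = Σ_{i,j} xᵢ yⱼ z_{j-i} w_{i+j}` is a balanced neighborly polynomial
of type `(k,k,k,k)`: `H(f,S) = k^{|S|}` for all `S ⊆ {1,2,3,4}` with `|S| ≤ 2`. -/
theorem stmt15 (K : Type*) [Field K] (k : ℕ) [NeZero k] (hk : Odd k) :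
    ∀ S : Finset (Fin 4), S.card ≤ 2 →
      Hdim (Prod.fst : Fin 4 × ZMod k → Fin 4)
        (∑ i : ZMod k, ∑ j : ZMod k,
          (X ((0 : Fin 4), i) * X ((1 : Fin 4), j) *
            X ((2 : Fin 4), j - i) * X ((3 : Fin 4), i + j) : MvPolynomial (Fin 4 × ZMod k) K))
        S = k ^ S.card := by
  intro S hS
  rw [← arrayPolynomial_sumDiffArray,
    (isOrthogonalArray_sumDiffArray hk).Hdim_arrayPolynomial hS (by omega), ZMod.card]
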